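/- Let P = Q[x_1,...,x_n], let σ and τ be term orderings, I a nonzero ideal in P, and p a prime that is σ-good for I. If p is also τ-good for I, then O_τ(I_{(p,σ)}) = O_τ(I), where I_{(p,σ)} = ⟨π_p(G_σ)⟩ ⊆ F_p[x_1,...,x_n]. -/

import Mathlib

open MvPolynomial
open scoped Classical

namespace GB

variable {n : ℕ}

/-- The σ-leading exponent (leading term, as a power-product) of a polynomial;
`0` for the zero polynomial. -/
noncomputable def lexp {K : Type*} [CommSemiring K] (m : MonomialOrder (Fin n))
    (f : MvPolynomial (Fin n) K) : Fin n →₀ ℕ :=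
  m.toSyn.symm (f.support.sup fun d => m.toSyn d)

/-- The σ-leading coefficient. -/
noncomputable def lcoeff {K : Type*} [CommSemiring K] (m : MonomialOrder (Fin n))
    (f : MvPolynomial (Fin n) K) : K :=
  MvPolynomial.coeff (lexp m f) f

/-- The σ-leading monomial (leading coefficient times leading power-product). -/
noncomputable def LM {K : Type*} [CommSemiring K] (m : MonomialOrder (Fin n))
    (f : MvPolynomial (Fin n) K) : MvPolynomial (Fin n) K :=
  monomial (lexp m f) (lcoeff m f)

/-- The leading term ideal `LT_σ(I)` of an ideal, over a field. -/
noncomputable def LTIdeal {K : Type*} [Field K] (m : MonomialOrder (Fin n))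
    (I : Ideal (MvPolynomial (Fin n) K)) : Ideal (MvPolynomial (Fin n) K) :=
  Ideal.span {t | ∃ f ∈ I, f ≠ 0 ∧ t = monomial (lexp m f) (1 : K)}

/-- `G` is a σ-Gröbner basis of `I` (over a field). -/
def IsGB {K : Type*} [Field K] (m : MonomialOrder (Fin n))
    (G : Finset (MvPolynomial (Fin n) K)) (I : Ideal (MvPolynomial (Fin n) K)) : Prop :=
  (0 : MvPolynomial (Fin n) K) ∉ G ∧ (G : Set (MvPolynomial (Fin n) K)) ⊆ I ∧
    Ideal.span (G : Set (MvPolynomial (Fin n) K)) = I ∧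
    ∀ f ∈ I, f ≠ 0 → ∃ g ∈ G, lexp m g ≤ lexp m f

/-- `G` is the reduced σ-Gröbner basis of `I`. -/
def IsReducedGB {K : Type*} [Field K] (m : MonomialOrder (Fin n))
    (G : Finset (MvPolynomial (Fin n) K)) (I : Ideal (MvPolynomial (Fin n) K)) : Prop :=
  IsGB m G I ∧ (∀ g ∈ G, lcoeff m g = 1) ∧
    ∀ g ∈ G, ∀ d ∈ g.support, ∀ g' ∈ G, g' ≠ g → ¬ lexp m g' ≤ d

/-- `G` is a strong σ-Gröbner basis of the ideal `J ⊆ ℤ[x]` it generates. -/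
def IsStrongGB (m : MonomialOrder (Fin n)) (G : Finset (MvPolynomial (Fin n) ℤ))
    (J : Ideal (MvPolynomial (Fin n) ℤ)) : Prop :=
  (0 : MvPolynomial (Fin n) ℤ) ∉ G ∧ Ideal.span (G : Set (MvPolynomial (Fin n) ℤ)) = J ∧
    ∀ f ∈ J, f ≠ 0 → ∃ g ∈ G, LM m g ∣ LM m f

/-- `G` is a minimal strong σ-Gröbner basis of `J`. -/
def IsMinStrongGB (m : MonomialOrder (Fin n)) (G : Finset (MvPolynomial (Fin n) ℤ))
    (J : Ideal (MvPolynomial (Fin n) ℤ)) : Prop :=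
  IsStrongGB m G J ∧ ∀ g ∈ G, ∀ g' ∈ G, g ≠ g' → ¬ LM m g ∣ LM m g'

/-- The denominator of a polynomial with rational coefficients. -/
def den (f : MvPolynomial (Fin n) ℚ) : ℕ :=
  f.support.lcm fun d => (MvPolynomial.coeff d f).den

/-- The denominator of a finite set of polynomials. -/
noncomputable def denF (G : Finset (MvPolynomial (Fin n) ℚ)) : ℕ :=
  G.lcm den

/-- `f` scaled by `den f`, as an integer polynomial. -/
noncomputable def intScale (f : MvPolynomial (Fin n) ℚ) : MvPolynomial (Fin n) ℤ :=
  f.support.sum fun d => monomial d (MvPolynomial.coeff d f * (den f : ℚ)).num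

/-- The primitive integral part of a polynomial with rational coefficients. -/
noncomputable def primQ (f : MvPolynomial (Fin n) ℚ) : MvPolynomial (Fin n) ℤ :=
  (intScale f).support.sum fun d =>
    monomial d (MvPolynomial.coeff d (intScale f) /
      ((intScale f).support.gcd fun e => MvPolynomial.coeff e (intScale f)))

/-- Reduction of a rational number modulo `p` (meaningful when `p ∤ a.den`). -/
noncomputable def redQ (p : ℕ) (a : ℚ) : ZMod p :=
  (a.num : ZMod p) * (a.den : ZMod p)⁻¹

/-- Coefficientwise reduction modulo `p` of a polynomial with rational coefficients
(meaningful when `p` divides no coefficient denominator). -/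
noncomputable def piP (p : ℕ) (f : MvPolynomial (Fin n) ℚ) :
    MvPolynomial (Fin n) (ZMod p) :=
  f.support.sum fun d => monomial d (redQ p (MvPolynomial.coeff d f))

/-- A σ-ordered tuple of (necessarily distinct) power-products. -/
def SOrd (m : MonomialOrder (Fin n)) (L : List (Fin n →₀ ℕ)) : Prop :=
  L.Pairwise fun a b => m.toSyn a < m.toSyn b

/-- `T'` strictly σ-precedes `T`:  either `T` is a proper prefix of `T'`, or at the first
index where they differ (within both lengths) the entry of `T'` is σ-smaller. -/
def Prec (m : MonomialOrder (Fin n)) (T' T : List (Fin n →₀ ℕ)) : Prop :=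
  (T <+: T' ∧ T ≠ T') ∨
    ∃ k, k < T.length ∧ k < T'.length ∧ T.take k = T'.take k ∧
      m.toSyn (T'.getD k 0) < m.toSyn (T.getD k 0)

/-- `T'` σ-precedes or equals `T`. -/
def PrecEq (m : MonomialOrder (Fin n)) (T' T : List (Fin n →₀ ℕ)) : Prop :=
  Prec m T' T ∨ T' = T

/-- The minimal generating set of the monomial ideal `LT_σ(I)`: the set of leading
power-products of nonzero elements of `I` which are minimal w.r.t. divisibility. -/
def minGenSet {K : Type*} [Field K] (m : MonomialOrder (Fin n))
    (I : Ideal (MvPolynomial (Fin n) K)) : Set (Fin n →₀ ℕ) :=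
  {d | (∃ f ∈ I, f ≠ 0 ∧ lexp m f = d) ∧
    ∀ f ∈ I, f ≠ 0 → lexp m f ≤ d → lexp m f = d}

/-- `L` is the tuple `O_σ(I)`: the σ-ordered tuple of the minimal generating set
of `LT_σ(I)`. -/
def IsOsIdeal {K : Type*} [Field K] (m : MonomialOrder (Fin n))
    (I : Ideal (MvPolynomial (Fin n) K)) (L : List (Fin n →₀ ℕ)) : Prop :=
  SOrd m L ∧ ∀ d, d ∈ L ↔ d ∈ minGenSet m I

/-- `L` is the σ-ordered tuple of the interreduction of the set `S` of power-products. -/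
def IsOsSet (m : MonomialOrder (Fin n)) (S : Finset (Fin n →₀ ℕ))
    (L : List (Fin n →₀ ℕ)) : Prop :=
  SOrd m L ∧ ∀ d, d ∈ L ↔ (d ∈ S ∧ ∀ s ∈ S, s ≤ d → s = d)

end GB

/-!
Reduction modulo `p` is a ring map only on `ℤ_(p)`, so everything is lifted to `ℤ_(p)[x]`.
A reduced Gröbner basis whose denominators are prime to `p` is monic with coefficients in
`ℤ_(p)`, so dividing by it never introduces `p` into a denominator. Dividing by `G_σ` shows that
`π_p` maps the `p`-integral part of `I` onto `I_{(p,σ)}`. Dividing by `G_τ` until the leading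
coefficient becomes a unit mod `p` shows that every τ-leading term of `I_{(p,σ)}` is one of `I`;
conversely the monic `π_p(G_τ) ⊆ I_{(p,σ)}` keeps the leading terms of `G_τ`. So every leading
exponent of either ideal is divisible by one of the other, and the minimal generators coincide.
-/

namespace GB

open MonomialOrder

section Degree

variable {n : ℕ} {R S : Type*}

lemma lexp_eq_degree [CommSemiring R] (m : MonomialOrder (Fin n)) (f : MvPolynomial (Fin n) R) :
    lexp m f = m.degree f := rfl

lemma lcoeff_eq_leadingCoeff [CommSemiring R] (m : MonomialOrder (Fin n))
    (f : MvPolynomial (Fin n) R) : lcoeff m f = m.leadingCoeff f := rfl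

variable [CommRing R] [CommRing S] {m : MonomialOrder (Fin n)}

lemma degree_map_of_injective {φ : R →+* S} (hφ : Function.Injective φ)
    (f : MvPolynomial (Fin n) R) : m.degree (map φ f) = m.degree f := by
  unfold MonomialOrder.degree
  rw [support_map_of_injective f hφ]

lemma leadingCoeff_map_of_injective {φ : R →+* S} (hφ : Function.Injective φ)
    (f : MvPolynomial (Fin n) R) : m.leadingCoeff (map φ f) = φ (m.leadingCoeff f) := by
  rw [MonomialOrder.leadingCoeff, degree_map_of_injective hφ, coeff_map]
  rfl

lemma degree_map_of_leadingCoeff_ne_zero {φ : R →+* S} {f : MvPolynomial (Fin n) R}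
    (hf : φ (m.leadingCoeff f) ≠ 0) : m.degree (map φ f) = m.degree f := by
  refine m.toSyn.injective (le_antisymm ?_ (m.le_degree ?_))
  · exact m.degree_le_iff.mpr fun c hc => m.le_degree (support_map_subset φ f hc)
  · rwa [mem_support_iff, coeff_map]

lemma degree_sub_monomial_mul_lt {f g : MvPolynomial (Fin n) R} (hg : m.Monic g)
    (hgf : m.degree g ≤ m.degree f) :
    f - monomial (m.degree f - m.degree g) (m.leadingCoeff f) * g = 0 ∨
      m.degree (f - monomial (m.degree f - m.degree g) (m.leadingCoeff f) * g) ≺[m]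
        m.degree f := by
  set e := m.degree f - m.degree g
  set r := f - monomial e (m.leadingCoeff f) * g
  have he : e + m.degree g = m.degree f := tsub_add_cancel_of_le hgf
  have hcoeff : r.coeff (m.degree f) = 0 := by
    rw [coeff_sub, ← he, coeff_monomial_mul, hg.coeff_degree, mul_one, he]
    exact sub_self _
  have hle : m.degree r ≼[m] m.degree f := by
    refine m.degree_sub_le.trans (sup_le le_rfl ?_)
    refine m.degree_mul_le.trans ?_
    rw [← he, map_add, map_add]
    gcongr
    exact m.degree_monomial_le _
  by_cases hr : r = 0
  · exact Or.inl hr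
  · refine Or.inr (lt_of_le_of_ne hle fun h => ?_)
    rw [← m.toSyn.injective h] at hcoeff
    exact m.coeff_degree_ne_zero_iff.mpr hr hcoeff

end Degree

lemma minGenSet_subset {n : ℕ} {K K' : Type*} [Field K] [Field K'] (m : MonomialOrder (Fin n))
    {I : Ideal (MvPolynomial (Fin n) K)} {J : Ideal (MvPolynomial (Fin n) K')}
    (hIJ : ∀ f ∈ I, f ≠ 0 → ∃ h ∈ J, h ≠ 0 ∧ lexp m h ≤ lexp m f)
    (hJI : ∀ h ∈ J, h ≠ 0 → ∃ f ∈ I, f ≠ 0 ∧ lexp m f ≤ lexp m h) :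
    minGenSet m I ⊆ minGenSet m J := by
  rintro d ⟨⟨f, hfI, hf, rfl⟩, hmin⟩
  obtain ⟨h, hhJ, hh, hhf⟩ := hIJ f hfI hf
  obtain ⟨f', hf'I, hf', hf'h⟩ := hJI h hhJ hh
  have hh_eq : lexp m h = lexp m f := le_antisymm hhf (hmin f' hf'I hf' (hf'h.trans hhf) ▸ hf'h)
  refine ⟨⟨h, hhJ, hh, hh_eq⟩, fun k hkJ hk hkf => le_antisymm hkf ?_⟩
  obtain ⟨f'', hf''I, hf'', hf''k⟩ := hJI k hkJ hk
  exact hmin f'' hf''I hf'' (hf''k.trans hkf) ▸ hf''k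

section PIntegers

variable (p : ℕ) [Fact p.Prime]

/-- The localization `ℤ_(p)` inside `ℚ`. -/
def pIntegers : Subring ℚ where
  carrier := {a | ¬ p ∣ a.den}
  mul_mem' {a b} ha hb h :=
    ((Fact.out : p.Prime).dvd_mul.mp (h.trans (Rat.mul_den_dvd a b))).elim ha hb
  one_mem' := (Fact.out : p.Prime).not_dvd_one
  add_mem' {a b} ha hb h :=
    ((Fact.out : p.Prime).dvd_mul.mp (h.trans (Rat.add_den_dvd a b))).elim ha hb
  zero_mem' := (Fact.out : p.Prime).not_dvd_one
  neg_mem' {a} ha := by rwa [Set.mem_ofPred_eq, Rat.den_neg_eq_den]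

variable {p} in
lemma den_cast_ne_zero {a : ℚ} (ha : a ∈ pIntegers p) : (a.den : ZMod p) ≠ 0 := by
  rwa [Ne, ZMod.natCast_eq_zero_iff]

/-- Reduction modulo `p`; on `ℤ_(p)` the junk value of `Rat.cast` at `p ∣ den` never occurs. -/
def residue : pIntegers p →+* ZMod p where
  toFun a := ((a : ℚ) : ZMod p)
  map_one' := Rat.cast_one
  map_mul' a b := Rat.cast_mul_of_ne_zero (den_cast_ne_zero a.2) (den_cast_ne_zero b.2)
  map_zero' := Rat.cast_zero
  map_add' a b := Rat.cast_add_of_ne_zero (den_cast_ne_zero a.2) (den_cast_ne_zero b.2)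

lemma residue_surjective : Function.Surjective (residue p) := fun x => by
  obtain ⟨k, rfl⟩ := ZMod.intCast_surjective x
  exact ⟨k, map_intCast _ k⟩

variable {p} {n : ℕ}

lemma coeff_piP (f : MvPolynomial (Fin n) ℚ) (d : Fin n →₀ ℕ) :
    coeff d (piP p f) = ((coeff d f : ℚ) : ZMod p) := by
  rw [piP, coeff_sum]
  simp only [coeff_monomial, redQ, ← div_eq_mul_inv, ← Rat.cast_def]
  rw [Finset.sum_ite_eq' f.support d]
  split_ifs with hd
  · rfl
  · rw [notMem_support_iff.mp hd, Rat.cast_zero]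

lemma piP_map_subtype (F : MvPolynomial (Fin n) (pIntegers p)) :
    piP p (map (pIntegers p).subtype F) = map (residue p) F := by
  ext d
  rw [coeff_piP, coeff_map, coeff_map]
  rfl

lemma exists_map_subtype_eq {f : MvPolynomial (Fin n) ℚ} (hf : ∀ d, coeff d f ∈ pIntegers p) :
    ∃ F, map (pIntegers p).subtype F = f := by
  refine mem_range_map_iff_coeffs_subset.mpr fun c hc => ?_
  obtain ⟨d, -, rfl⟩ := mem_coeffs_iff.mp hc
  exact ⟨⟨_, hf d⟩, rfl⟩

lemma coeff_mem_pIntegers_of_not_dvd_denF {G : Finset (MvPolynomial (Fin n) ℚ)}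
    (hp : ¬ p ∣ denF G) {g : MvPolynomial (Fin n) ℚ} (hg : g ∈ G) (d : Fin n →₀ ℕ) :
    coeff d g ∈ pIntegers p := by
  by_cases hd : d ∈ g.support
  · have hden : (coeff d g).den ∣ den g := Finset.dvd_lcm hd
    exact fun hdvd => hp (hdvd.trans (hden.trans (Finset.dvd_lcm hg)))
  · rw [notMem_support_iff.mp hd]
    exact (pIntegers p).zero_mem

/-- `I_{(p,σ)}` for `G = G_σ`. -/
noncomputable abbrev reductionIdeal (p : ℕ) (G : Finset (MvPolynomial (Fin n) ℚ)) :
    Ideal (MvPolynomial (Fin n) (ZMod p)) :=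
  Ideal.span ((G.image (piP p) : Finset (MvPolynomial (Fin n) (ZMod p))) :
    Set (MvPolynomial (Fin n) (ZMod p)))

end PIntegers

section Reduction

variable {p : ℕ} [Fact p.Prime] {n : ℕ} {m : MonomialOrder (Fin n)}
  {I : Ideal (MvPolynomial (Fin n) ℚ)} {G : Finset (MvPolynomial (Fin n) ℚ)}

lemma exists_monic_lift {g : MvPolynomial (Fin n) ℚ} (hg : ∀ d, coeff d g ∈ pIntegers p)
    (hg1 : lcoeff m g = 1) :
    ∃ g' : MvPolynomial (Fin n) (pIntegers p),
      map (pIntegers p).subtype g' = g ∧ m.Monic g' := by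
  obtain ⟨g', rfl⟩ := exists_map_subtype_eq hg
  rw [lcoeff_eq_leadingCoeff, leadingCoeff_map_of_injective Subtype.val_injective] at hg1
  exact ⟨g', rfl, Subtype.ext hg1⟩

lemma exists_reduction_step (hG : IsReducedGB m G I) (hp : ¬ p ∣ denF G)
    {F : MvPolynomial (Fin n) (pIntegers p)} (hFI : map (pIntegers p).subtype F ∈ I)
    (hF : F ≠ 0) :
    ∃ g ∈ G, ∃ F', map (pIntegers p).subtype F' ∈ I ∧
      (F' = 0 ∨ m.degree F' ≺[m] m.degree F) ∧
      map (residue p) F = map (residue p) F' +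
        monomial (m.degree F - m.degree g) (residue p (m.leadingCoeff F)) * piP p g := by
  have hF' : map (pIntegers p).subtype F ≠ 0 :=
    (map_injective _ Subtype.val_injective).ne_iff.mpr hF
  obtain ⟨g, hgG, hle⟩ := hG.1.2.2.2 _ hFI hF'
  obtain ⟨g', rfl, hmonic⟩ :=
    exists_monic_lift (coeff_mem_pIntegers_of_not_dvd_denF hp hgG) (hG.2.1 _ hgG)
  rw [lexp_eq_degree, lexp_eq_degree, degree_map_of_injective Subtype.val_injective,
    degree_map_of_injective Subtype.val_injective] at hle
  refine ⟨_, hgG, F - monomial (m.degree F - m.degree g') (m.leadingCoeff F) * g', ?_,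
    degree_sub_monomial_mul_lt hmonic hle, ?_⟩
  · rw [map_sub, map_mul, map_monomial]
    exact I.sub_mem hFI (I.mul_mem_left _ (hG.1.2.1 hgG))
  · rw [piP_map_subtype, degree_map_of_injective Subtype.val_injective, map_sub, map_mul,
      map_monomial, sub_add_cancel]

lemma map_residue_mem_reductionIdeal (hG : IsReducedGB m G I) (hp : ¬ p ∣ denF G)
    {F : MvPolynomial (Fin n) (pIntegers p)} (hFI : map (pIntegers p).subtype F ∈ I) :
    map (residue p) F ∈ reductionIdeal p G := by
  induction h : m.toSyn (m.degree F) using WellFoundedLT.induction generalizing F with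
  | ind s ih =>
    by_cases hF : F = 0
    · rw [hF, map_zero]
      exact zero_mem _
    obtain ⟨g, hgG, F', hF'I, hlt, hdecomp⟩ := exists_reduction_step hG hp hFI hF
    rw [hdecomp]
    refine add_mem ?_ (Ideal.mul_mem_left _ _ (Ideal.subset_span ?_))
    · rcases hlt with rfl | hlt
      · rw [map_zero]
        exact zero_mem _
      · exact ih _ (h ▸ hlt) hF'I rfl
    · simpa using ⟨g, hgG, rfl⟩

lemma exists_degree_eq_degree_map_residue (hG : IsReducedGB m G I) (hp : ¬ p ∣ denF G)
    {F : MvPolynomial (Fin n) (pIntegers p)} (hFI : map (pIntegers p).subtype F ∈ I)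
    (hne : map (residue p) F ≠ 0) :
    ∃ f ∈ I, f ≠ 0 ∧ m.degree f = m.degree (map (residue p) F) := by
  induction h : m.toSyn (m.degree F) using WellFoundedLT.induction generalizing F with
  | ind s ih =>
    have hF : F ≠ 0 := by
      rintro rfl
      exact hne (map_zero _)
    by_cases hc : residue p (m.leadingCoeff F) = 0
    · obtain ⟨g, -, F', hF'I, hlt, hdecomp⟩ := exists_reduction_step hG hp hFI hF
      rw [hc, monomial_zero, zero_mul, add_zero] at hdecomp
      rw [hdecomp] at hne ⊢
      rcases hlt with rfl | hlt
      · exact absurd (map_zero _) hne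
      · exact ih _ (h ▸ hlt) hF'I hne rfl
    · refine ⟨_, hFI, (map_injective _ Subtype.val_injective).ne_iff.mpr hF, ?_⟩
      rw [degree_map_of_injective Subtype.val_injective, degree_map_of_leadingCoeff_ne_zero hc]

lemma exists_lift_of_mem_reductionIdeal (hGI : (G : Set (MvPolynomial (Fin n) ℚ)) ⊆ I)
    (hp : ¬ p ∣ denF G)
    {h : MvPolynomial (Fin n) (ZMod p)}
    (hh : h ∈ reductionIdeal p G) :
    ∃ F, map (pIntegers p).subtype F ∈ I ∧ map (residue p) F = h := by
  induction hh using Submodule.span_induction with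
  | mem x hx =>
    obtain ⟨g, hgG, rfl⟩ := Finset.mem_image.mp (Finset.mem_coe.mp hx)
    obtain ⟨g', rfl⟩ := exists_map_subtype_eq (coeff_mem_pIntegers_of_not_dvd_denF hp hgG)
    exact ⟨g', hGI hgG, (piP_map_subtype g').symm⟩
  | zero => exact ⟨0, by simp, map_zero _⟩
  | add x y _ _ hx hy =>
    obtain ⟨F₁, hF₁, rfl⟩ := hx
    obtain ⟨F₂, hF₂, rfl⟩ := hy
    exact ⟨F₁ + F₂, by simpa using I.add_mem hF₁ hF₂, map_add _ _ _⟩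
  | smul a x _ hx =>
    obtain ⟨F, hF, rfl⟩ := hx
    obtain ⟨Q, rfl⟩ := map_surjective _ (residue_surjective p) a
    exact ⟨Q * F, by simpa using I.mul_mem_left _ hF, map_mul _ _ _⟩

end Reduction

section GoodPrimes

variable {p : ℕ} [Fact p.Prime] {n : ℕ} {mσ mτ : MonomialOrder (Fin n)}
  {I : Ideal (MvPolynomial (Fin n) ℚ)} {Gσ Gτ : Finset (MvPolynomial (Fin n) ℚ)}

lemma exists_lexp_le_of_mem_reductionIdeal (hGσ : IsReducedGB mσ Gσ I) (hpσ : ¬ p ∣ denF Gσ)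
    (hGτ : IsReducedGB mτ Gτ I) (hpτ : ¬ p ∣ denF Gτ) (h : MvPolynomial (Fin n) (ZMod p))
    (hh : h ∈ reductionIdeal p Gσ) (hne : h ≠ 0) :
    ∃ f ∈ I, f ≠ 0 ∧ lexp mτ f ≤ lexp mτ h := by
  obtain ⟨F, hFI, rfl⟩ := exists_lift_of_mem_reductionIdeal hGσ.1.2.1 hpσ hh
  obtain ⟨f, hfI, hf, hdeg⟩ := exists_degree_eq_degree_map_residue hGτ hpτ hFI hne
  exact ⟨f, hfI, hf, hdeg.le⟩

lemma exists_mem_reductionIdeal_lexp_le (hGσ : IsReducedGB mσ Gσ I) (hpσ : ¬ p ∣ denF Gσ)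
    (hGτ : IsReducedGB mτ Gτ I) (hpτ : ¬ p ∣ denF Gτ) (f : MvPolynomial (Fin n) ℚ)
    (hfI : f ∈ I) (hf : f ≠ 0) :
    ∃ h ∈ reductionIdeal p Gσ, h ≠ 0 ∧ lexp mτ h ≤ lexp mτ f := by
  obtain ⟨g, hgG, hle⟩ := hGτ.1.2.2.2 f hfI hf
  obtain ⟨g', rfl, hmonic⟩ :=
    exists_monic_lift (coeff_mem_pIntegers_of_not_dvd_denF hpτ hgG) (hGτ.2.1 _ hgG)
  have hlc : residue p (mτ.leadingCoeff g') ≠ 0 := by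
    rw [hmonic.leadingCoeff_eq_one, map_one]
    exact one_ne_zero
  refine ⟨map (residue p) g', map_residue_mem_reductionIdeal hGσ hpσ (hGτ.1.2.1 hgG), ?_, ?_⟩
  · intro h0
    apply hlc
    rw [MonomialOrder.leadingCoeff, ← coeff_map, h0, coeff_zero]
  · rw [lexp_eq_degree, degree_map_of_leadingCoeff_ne_zero hlc]
    rwa [lexp_eq_degree, degree_map_of_injective Subtype.val_injective] at hle

end GoodPrimes

end GB

theorem stmt16_general {n : ℕ} (mσ mτ : MonomialOrder (Fin n))
    (I : Ideal (MvPolynomial (Fin n) ℚ))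
    (Gσ Gτ : Finset (MvPolynomial (Fin n) ℚ))
    (hGσ : GB.IsReducedGB mσ Gσ I) (hGτ : GB.IsReducedGB mτ Gτ I)
    (p : ℕ) [Fact p.Prime] (hpσ : ¬ p ∣ GB.denF Gσ) (hpτ : ¬ p ∣ GB.denF Gτ)
    (L L' : List (Fin n →₀ ℕ))
    (hL : GB.IsOsIdeal mτ
      (Ideal.span ((Gσ.image (GB.piP p) : Finset (MvPolynomial (Fin n) (ZMod p))) :
        Set (MvPolynomial (Fin n) (ZMod p)))) L)
    (hL' : GB.IsOsIdeal mτ I L') :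
    L = L' := by
  have hJI := GB.exists_lexp_le_of_mem_reductionIdeal hGσ hpσ hGτ hpτ
  have hIJ := GB.exists_mem_reductionIdeal_lexp_le hGσ hpσ hGτ hpτ
  have hmin : GB.minGenSet mτ (GB.reductionIdeal p Gσ) = GB.minGenSet mτ I :=
    (GB.minGenSet_subset mτ hJI hIJ).antisymm (GB.minGenSet_subset mτ hIJ hJI)
  exact hL.1.eq_of_mem_iff hL'.1 fun d => by rw [hL.2, hL'.2, hmin]

/-- if `p` is σ-good and τ-good for `I` then
`O_τ(I_{(p,σ)}) = O_τ(I)`. -/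
theorem stmt16 {n : ℕ} (mσ mτ : MonomialOrder (Fin n))
    (I : Ideal (MvPolynomial (Fin n) ℚ)) (hI : I ≠ ⊥)
    (Gσ Gτ : Finset (MvPolynomial (Fin n) ℚ))
    (hGσ : GB.IsReducedGB mσ Gσ I) (hGτ : GB.IsReducedGB mτ Gτ I)
    (p : ℕ) [Fact p.Prime] (hpσ : ¬ p ∣ GB.denF Gσ) (hpτ : ¬ p ∣ GB.denF Gτ)
    (L L' : List (Fin n →₀ ℕ))
    (hL : GB.IsOsIdeal mτ
      (Ideal.span ((Gσ.image (GB.piP p) : Finset (MvPolynomial (Fin n) (ZMod p))) :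
        Set (MvPolynomial (Fin n) (ZMod p)))) L)
    (hL' : GB.IsOsIdeal mτ I L') :
    L = L' :=
  stmt16_general mσ mτ I Gσ Gτ hGσ hGτ p hpσ hpτ L L' hL hL'
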